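/- arXiv:1305.3131 — 2 statements merged into one kernel-verified Lean document; each statement's English description precedes it below -/
import Mathlib

section
/- The calculus Rf(box, T_{K_m}) extended with the closure rule (irr): T_R(r,x,x) / ⊥ is sound and constructively complete for K_m over the class of models in which every relation R_a is irreflexive: if a finite set N of K_m-formulas is satisfiable in a model with all relations irreflexive then every fully expanded tableau for N in this calculus has an open branch, and from every open branch B of a fully expanded tableau one can construct a K_m-model with all relations irreflexive, with domain the labels of B, in which every tableau formula of B is true. -/
set_option autoImplicit false

namespace KmTableau

/-- Formulas of the multi-modal logic `K_m`:
`φ ::= p | ¬φ | φ∨φ | [a]φ`, with propositional variables `p : ℕ`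
and relational constants `a : Fin m`. -/
inductive Fm (m : ℕ) : Type
  | var : ℕ → Fm m
  | neg : Fm m → Fm m
  | or : Fm m → Fm m → Fm m
  | box : Fin m → Fm m → Fm m

/-- A `K_m`-model `M = (W, (R_a)_a, V)` with `W` nonempty. -/
structure KModel (m : ℕ) where
  W : Type
  ne : Nonempty W
  R : Fin m → W → W → Prop
  V : ℕ → W → Prop

/-- Satisfaction in a `K_m`-model. -/
def KModel.sat {m : ℕ} (M : KModel m) : M.W → Fm m → Prop
  | v, .var p => M.V p v
  | v, .neg φ => ¬ M.sat v φ
  | v, .or φ ψ => M.sat v φ ∨ M.sat v ψ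
  | v, .box a φ => ∀ w, M.R a v w → M.sat w φ

/-- A set of formulas is satisfiable if some model and world satisfy all its members. -/
def Satisfiable {m : ℕ} (N : Set (Fm m)) : Prop :=
  ∃ (M : KModel m) (v : M.W), ∀ φ ∈ N, M.sat v φ

/-- Labels: terms generated from the initial constant `a₀` and Skolem terms `f(a,φ,t)`. -/
inductive Label (m : ℕ) : Type
  | a0 : Label m
  | sk : Fin m → Fm m → Label m → Label m

/-- Tableau formulas: `T(φ,t)`, `F(φ,t)`, `T_R(a,t,t')`, `F_R(a,t,t')`. -/
inductive TabFm (m : ℕ) : Type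
  | T : Fm m → Label m → TabFm m
  | F : Fm m → Label m → TabFm m
  | TR : Fin m → Label m → Label m → TabFm m
  | FR : Fin m → Label m → Label m → TabFm m

/-- The labels occurring in a tableau formula. -/
def TabFm.labels {m : ℕ} : TabFm m → Set (Label m)
  | .T _ t => {t}
  | .F _ t => {t}
  | .TR _ t t' => {t, t'}
  | .FR _ t t' => {t, t'}

/-- The labels occurring in a set of tableau formulas (the initial label `a₀`,
introduced at the root, always counts as occurring). -/
def Lab {m : ℕ} (B : Set (TabFm m)) : Set (Label m) :=
  insert Label.a0 {t | ∃ f ∈ B, t ∈ f.labels}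

/-- A calculus: `C s ds` holds if, on a branch whose set of formulas is `s`, some rule
of the calculus is applicable with denominator instances `ds` (a closure rule
application has `ds = []`). -/
abbrev Calc (m : ℕ) := Set (TabFm m) → List (Set (TabFm m)) → Prop

/-- The root node `{T(φ,a₀) | φ ∈ N}` of a tableau for input `N`. -/
def initial {m : ℕ} (N : Set (Fm m)) : Set (TabFm m) :=
  {f | ∃ φ ∈ N, f = TabFm.T φ Label.a0}

/-- A tableau for input `N` in calculus `C`: a finitely branching tree of sets of tableau
formulas (nodes indexed by positions `List ℕ`, children of `p` being `p ++ [i]`), whose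
root is `{T(φ,a₀) | φ ∈ N}`, and such that the children of every node are obtained by
applying a rule of `C`: each child adds one denominator instance to the node's set. -/
structure Tableau (m : ℕ) (C : Calc m) (N : Set (Fm m)) where
  node : List ℕ → Option (Set (TabFm m))
  rootEq : node [] = some (initial N)
  tree : ∀ (p : List ℕ) (i : ℕ), node (p ++ [i]) ≠ none → node p ≠ none
  step : ∀ (p : List ℕ) (s : Set (TabFm m)), node p = some s →
    (∀ i : ℕ, node (p ++ [i]) = none) ∨
    (∃ ds, C s ds ∧ ∀ i : ℕ, node (p ++ [i]) = (ds[i]?).map (fun d => s ∪ d))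

/-- A branch of a tableau: a maximal path from the root (represented by its
set of positions, a maximal chain under the prefix order). -/
structure Branch {m : ℕ} {C : Calc m} {N : Set (Fm m)} (Tb : Tableau m C N) where
  pos : Set (List ℕ)
  inTree : ∀ p ∈ pos, Tb.node p ≠ none
  chain : ∀ p ∈ pos, ∀ q ∈ pos, p <+: q ∨ q <+: p
  downClosed : ∀ p ∈ pos, ∀ q : List ℕ, q <+: p → q ∈ pos
  maximal : ∀ q : List ℕ, Tb.node q ≠ none → (∀ p ∈ pos, p <+: q ∨ q <+: p) → q ∈ pos

/-- The set of tableau formulas occurring on a branch. -/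
def Branch.fmls {m : ℕ} {C : Calc m} {N : Set (Fm m)} {Tb : Tableau m C N}
    (Br : Branch Tb) : Set (TabFm m) :=
  {f | ∃ p ∈ Br.pos, ∃ s, Tb.node p = some s ∧ f ∈ s}

/-- A branch is open if no closure rule has been applied (is applicable) on it. -/
def Branch.IsOpen {m : ℕ} {C : Calc m} {N : Set (Fm m)} {Tb : Tableau m C N}
    (Br : Branch Tb) : Prop := ¬ C Br.fmls []

/-- A tableau is fully expanded if on every open branch every applicable rule has been
applied, i.e. some denominator instance of the rule is already contained in the branch. -/
def Tableau.Expanded {m : ℕ} {C : Calc m} {N : Set (Fm m)} (Tb : Tableau m C N) : Prop :=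
  ∀ Br : Branch Tb, Br.IsOpen → ∀ ds, C Br.fmls ds → ∃ d ∈ ds, d ⊆ Br.fmls

/-- The calculus `T_{K_m}`. -/
def TKm (m : ℕ) : Calc m := fun s ds =>
  -- (¬⁺) T(¬p,x) / F(p,x)
  (∃ φ x, TabFm.T (.neg φ) x ∈ s ∧ ds = [{TabFm.F φ x}]) ∨
  -- (¬⁻) F(¬p,x) / T(p,x)
  (∃ φ x, TabFm.F (.neg φ) x ∈ s ∧ ds = [{TabFm.T φ x}]) ∨
  -- (∨⁺) T(p∨q,x) / T(p,x) | T(q,x)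
  (∃ φ ψ x, TabFm.T (.or φ ψ) x ∈ s ∧ ds = [{TabFm.T φ x}, {TabFm.T ψ x}]) ∨
  -- (∨⁻) F(p∨q,x) / F(p,x), F(q,x)
  (∃ φ ψ x, TabFm.F (.or φ ψ) x ∈ s ∧ ds = [{TabFm.F φ x, TabFm.F ψ x}]) ∨
  -- (box) T([r]p,x) / F_R(r,x,y) | T(p,y), for any label y occurring on the branch
  (∃ a φ x y, TabFm.T (.box a φ) x ∈ s ∧ y ∈ Lab s ∧
    ds = [{TabFm.FR a x y}, {TabFm.T φ y}]) ∨
  -- (dia) F([r]p,x) / T_R(r,x,f(r,p,x)), F(p,f(r,p,x))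
  (∃ a φ x, TabFm.F (.box a φ) x ∈ s ∧
    ds = [{TabFm.TR a x (Label.sk a φ x), TabFm.F φ (Label.sk a φ x)}]) ∨
  -- closure rules
  (∃ φ x, TabFm.T φ x ∈ s ∧ TabFm.F φ x ∈ s ∧ ds = []) ∨
  (∃ a x y, TabFm.TR a x y ∈ s ∧ TabFm.FR a x y ∈ s ∧ ds = [])

/-- A `K_m`-model whose domain is (a set of) labels: the model `I(B)` constructed from a
branch has domain the set of labels occurring in `B`. -/
structure LModel (m : ℕ) where
  R : Fin m → Label m → Label m → Prop
  V : ℕ → Label m → Prop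

/-- Satisfaction in a label model relativised to its domain `D`. -/
def LModel.sat {m : ℕ} (M : LModel m) (D : Set (Label m)) : Label m → Fm m → Prop
  | t, .var p => M.V p t
  | t, .neg φ => ¬ M.sat D t φ
  | t, .or φ ψ => M.sat D t φ ∨ M.sat D t ψ
  | t, .box a φ => ∀ t' ∈ D, M.R a t t' → M.sat D t' φ

/-- Every tableau formula of `B` is true in the model `M` with domain `Lab B`:
`T(φ,t) ∈ B` implies `φ` holds at `t`; `F(φ,t) ∈ B` implies `φ` fails at `t`;
`T_R(a,t,t') ∈ B` implies `(t,t') ∈ R_a`; `F_R(a,t,t') ∈ B` implies `(t,t') ∉ R_a`. -/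
def Reflects {m : ℕ} (M : LModel m) (B : Set (TabFm m)) : Prop :=
  (∀ φ t, TabFm.T φ t ∈ B → M.sat (Lab B) t φ) ∧
  (∀ φ t, TabFm.F φ t ∈ B → ¬ M.sat (Lab B) t φ) ∧
  (∀ a t t', TabFm.TR a t t' ∈ B → M.R a t t') ∧
  (∀ a t t', TabFm.FR a t t' ∈ B → ¬ M.R a t t')

/-- The refined calculus `Rf(box, T_{K_m})`: `T_{K_m}` with the rule (box) replaced by
the rule (□): `T([r]p,x), T_R(r,x,y) / T(p,y)`, here further extended with the
closure rule (irr): `T_R(r,x,x) / ⊥`. -/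
def RfKmIrr (m : ℕ) : Calc m := fun s ds =>
  (∃ φ x, TabFm.T (.neg φ) x ∈ s ∧ ds = [{TabFm.F φ x}]) ∨
  (∃ φ x, TabFm.F (.neg φ) x ∈ s ∧ ds = [{TabFm.T φ x}]) ∨
  (∃ φ ψ x, TabFm.T (.or φ ψ) x ∈ s ∧ ds = [{TabFm.T φ x}, {TabFm.T ψ x}]) ∨
  (∃ φ ψ x, TabFm.F (.or φ ψ) x ∈ s ∧ ds = [{TabFm.F φ x, TabFm.F ψ x}]) ∨
  -- (□) T([r]p,x), T_R(r,x,y) / T(p,y)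
  (∃ a φ x y, TabFm.T (.box a φ) x ∈ s ∧ TabFm.TR a x y ∈ s ∧ ds = [{TabFm.T φ y}]) ∨
  (∃ a φ x, TabFm.F (.box a φ) x ∈ s ∧
    ds = [{TabFm.TR a x (Label.sk a φ x), TabFm.F φ (Label.sk a φ x)}]) ∨
  (∃ φ x, TabFm.T φ x ∈ s ∧ TabFm.F φ x ∈ s ∧ ds = []) ∨
  (∃ a x y, TabFm.TR a x y ∈ s ∧ TabFm.FR a x y ∈ s ∧ ds = []) ∨
  -- (irr) T_R(r,x,x) / ⊥
  (∃ a x, TabFm.TR a x x ∈ s ∧ ds = [])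
/-! Soundness follows a branch whose formulas all stay true under an interpretation of the
labels in the given irreflexive model, Skolem term `f(a,φ,x)` denoting a chosen
`R_a`-successor of `x` refuting `φ`; no closure rule can fire on it, `(irr)` because the
model is irreflexive. Completeness reads the model off an open saturated branch: `R_a`
holds where `T_R(a,·,·)` does and `p` where `T(p,·)` does; `(irr)` keeps it irreflexive,
and truth of `T`/`F` formulas goes by induction on the formula, one rule per case. -/

section Rules

variable {m : ℕ} {s : Set (TabFm m)}

theorem RfKmIrr.negT {φ : Fm m} {x : Label m} (h : TabFm.T (.neg φ) x ∈ s) :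
    RfKmIrr m s [{TabFm.F φ x}] :=
  Or.inl ⟨φ, x, h, rfl⟩

theorem RfKmIrr.negF {φ : Fm m} {x : Label m} (h : TabFm.F (.neg φ) x ∈ s) :
    RfKmIrr m s [{TabFm.T φ x}] :=
  Or.inr <| Or.inl ⟨φ, x, h, rfl⟩

theorem RfKmIrr.orT {φ ψ : Fm m} {x : Label m} (h : TabFm.T (.or φ ψ) x ∈ s) :
    RfKmIrr m s [{TabFm.T φ x}, {TabFm.T ψ x}] :=
  Or.inr <| Or.inr <| Or.inl ⟨φ, ψ, x, h, rfl⟩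

theorem RfKmIrr.orF {φ ψ : Fm m} {x : Label m} (h : TabFm.F (.or φ ψ) x ∈ s) :
    RfKmIrr m s [{TabFm.F φ x, TabFm.F ψ x}] :=
  Or.inr <| Or.inr <| Or.inr <| Or.inl ⟨φ, ψ, x, h, rfl⟩

theorem RfKmIrr.box {a : Fin m} {φ : Fm m} {x y : Label m} (h : TabFm.T (.box a φ) x ∈ s)
    (hR : TabFm.TR a x y ∈ s) : RfKmIrr m s [{TabFm.T φ y}] :=
  Or.inr <| Or.inr <| Or.inr <| Or.inr <| Or.inl ⟨a, φ, x, y, h, hR, rfl⟩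

theorem RfKmIrr.dia {a : Fin m} {φ : Fm m} {x : Label m} (h : TabFm.F (.box a φ) x ∈ s) :
    RfKmIrr m s [{TabFm.TR a x (.sk a φ x), TabFm.F φ (.sk a φ x)}] :=
  Or.inr <| Or.inr <| Or.inr <| Or.inr <| Or.inr <| Or.inl ⟨a, φ, x, h, rfl⟩

theorem RfKmIrr.closeFm {φ : Fm m} {x : Label m} (hT : TabFm.T φ x ∈ s)
    (hF : TabFm.F φ x ∈ s) : RfKmIrr m s [] :=
  Or.inr <| Or.inr <| Or.inr <| Or.inr <| Or.inr <| Or.inr <| Or.inl ⟨φ, x, hT, hF, rfl⟩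

theorem RfKmIrr.closeRel {a : Fin m} {x y : Label m} (hT : TabFm.TR a x y ∈ s)
    (hF : TabFm.FR a x y ∈ s) : RfKmIrr m s [] :=
  Or.inr <| Or.inr <| Or.inr <| Or.inr <| Or.inr <| Or.inr <| Or.inr <| Or.inl
    ⟨a, x, y, hT, hF, rfl⟩

theorem RfKmIrr.irr {a : Fin m} {x : Label m} (h : TabFm.TR a x x ∈ s) : RfKmIrr m s [] :=
  Or.inr <| Or.inr <| Or.inr <| Or.inr <| Or.inr <| Or.inr <| Or.inr <| Or.inr ⟨a, x, h, rfl⟩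

end Rules

section Soundness

variable {m : ℕ}

def TabFm.Holds (M : KModel m) (θ : Label m → M.W) : TabFm m → Prop
  | .T φ t => M.sat (θ t) φ
  | .F φ t => ¬ M.sat (θ t) φ
  | .TR a t t' => M.R a (θ t) (θ t')
  | .FR a t t' => ¬ M.R a (θ t) (θ t')

open Classical in
noncomputable def skolemInterp (M : KModel m) (v : M.W) : Label m → M.W
  | .a0 => v
  | .sk a φ x =>
      if h : ∃ w, M.R a (skolemInterp M v x) w ∧ ¬ M.sat w φ then h.choose
      else skolemInterp M v x

theorem KModel.exists_rel_not_sat_of_not_sat_box {M : KModel m} {v : M.W} {a : Fin m}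
    {φ : Fm m} (h : ¬ M.sat v (.box a φ)) : ∃ w, M.R a v w ∧ ¬ M.sat w φ := by
  simpa [KModel.sat] using h

theorem skolemInterp_sk {M : KModel m} {v : M.W} {a : Fin m} {φ : Fm m} {x : Label m}
    (h : ¬ M.sat (skolemInterp M v x) (.box a φ)) :
    M.R a (skolemInterp M v x) (skolemInterp M v (.sk a φ x)) ∧
      ¬ M.sat (skolemInterp M v (.sk a φ x)) φ := by
  have hw := KModel.exists_rel_not_sat_of_not_sat_box h
  rw [skolemInterp, dif_pos hw]
  exact hw.choose_spec

theorem RfKmIrr.not_closed_of_holds {M : KModel m} (hirr : ∀ a w, ¬ M.R a w w)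
    {θ : Label m → M.W} {s : Set (TabFm m)} (hs : ∀ f ∈ s, f.Holds M θ) :
    ¬ RfKmIrr m s [] := by
  rintro (⟨_, _, _, h⟩ | ⟨_, _, _, h⟩ | ⟨_, _, _, _, h⟩ | ⟨_, _, _, _, h⟩ |
    ⟨_, _, _, _, _, _, h⟩ | ⟨_, _, _, _, h⟩ | ⟨φ, x, hT, hF, -⟩ |
    ⟨a, x, y, hT, hF, -⟩ | ⟨a, x, hR, -⟩)
  all_goals first
    | exact nomatch h
    | exact hs _ hF (hs _ hT)
    | exact hirr a (θ x) (hs _ hR)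

theorem RfKmIrr.exists_holds_of_holds {M : KModel m} {v : M.W} {s : Set (TabFm m)}
    (hs : ∀ f ∈ s, f.Holds M (skolemInterp M v)) {ds : List (Set (TabFm m))}
    (h : RfKmIrr m s ds) (hds : ds ≠ []) :
    ∃ d ∈ ds, ∀ f ∈ d, f.Holds M (skolemInterp M v) := by
  rcases h with ⟨φ, x, hx, rfl⟩ | ⟨φ, x, hx, rfl⟩ | ⟨φ, ψ, x, hx, rfl⟩ |
    ⟨φ, ψ, x, hx, rfl⟩ | ⟨a, φ, x, y, hx, hR, rfl⟩ | ⟨a, φ, x, hx, rfl⟩ |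
    ⟨-, -, -, -, rfl⟩ | ⟨-, -, -, -, -, rfl⟩ | ⟨-, -, -, rfl⟩
  · exact ⟨_, List.mem_singleton_self _, by rintro f rfl; exact hs (.T (.neg φ) x) hx⟩
  · refine ⟨_, List.mem_singleton_self _, ?_⟩
    rintro f rfl
    exact not_not.1 (hs (.F (.neg φ) x) hx)
  · rcases hs (.T (.or φ ψ) x) hx with hφ | hψ
    · exact ⟨_, List.mem_cons_self, by rintro f rfl; exact hφ⟩
    · exact ⟨_, List.mem_cons_of_mem _ (List.mem_singleton_self _), by rintro f rfl; exact hψ⟩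
  · have hx : ¬ _ ∧ ¬ _ := not_or.1 (hs (.F (.or φ ψ) x) hx)
    exact ⟨_, List.mem_singleton_self _, by rintro f (rfl | rfl); exacts [hx.1, hx.2]⟩
  · refine ⟨_, List.mem_singleton_self _, ?_⟩
    rintro f rfl
    exact hs (.T (.box a φ) x) hx _ (hs _ hR)
  · have hsk := skolemInterp_sk (hs (.F (.box a φ) x) hx)
    exact ⟨_, List.mem_singleton_self _, by rintro f (rfl | rfl); exacts [hsk.1, hsk.2]⟩
  all_goals exact absurd rfl hds

end Soundness

section Branches

variable {m : ℕ} {C : Calc m} {N : Set (Fm m)} (Tb : Tableau m C N)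

theorem Tableau.node_ne_none_of_prefix {p q : List ℕ} (hpq : p <+: q) (hq : Tb.node q ≠ none) :
    Tb.node p ≠ none := by
  obtain ⟨r, rfl⟩ := hpq
  induction r using List.reverseRecOn with
  | nil => simpa using hq
  | append_singleton r i ih => exact ih (Tb.tree _ i (by rwa [← List.append_assoc] at hq))

theorem Tableau.exists_child_of_prefix {p q : List ℕ} (hpq : p <+: q) (hne : p ≠ q)
    (hq : Tb.node q ≠ none) : ∃ j, Tb.node (p ++ [j]) ≠ none := by
  obtain ⟨_ | ⟨j, r⟩, rfl⟩ := hpq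
  · exact absurd (List.append_nil p).symm hne
  · exact ⟨j, Tb.node_ne_none_of_prefix ⟨r, by simp⟩ hq⟩

theorem Tableau.subset_of_prefix {p q : List ℕ} {s t : Set (TabFm m)} (hpq : p <+: q)
    (hp : Tb.node p = some s) (hq : Tb.node q = some t) : s ⊆ t := by
  obtain ⟨r, rfl⟩ := hpq
  induction r using List.reverseRecOn generalizing t with
  | nil => simp_all
  | append_singleton r i ih =>
    rw [← List.append_assoc] at hq
    obtain ⟨u, hu⟩ := Option.ne_none_iff_exists'.1 (Tb.tree (p ++ r) i (by rw [hq]; simp))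
    rcases Tb.step _ _ hu with hleaf | ⟨ds, -, hchildren⟩
    · rw [hleaf i] at hq
      exact nomatch hq
    · rw [hchildren i, Option.map_eq_some_iff] at hq
      obtain ⟨d, -, rfl⟩ := hq
      exact (ih hu).trans Set.subset_union_left

open Classical in
noncomputable def goodPath (Good : List ℕ → Prop) : ℕ → List ℕ
  | 0 => []
  | n + 1 =>
      if h : ∃ i, Good (goodPath Good n ++ [i]) then goodPath Good n ++ [h.choose]
      else goodPath Good n

section GoodPath

variable (Good : List ℕ → Prop)

theorem goodPath_prefix_of_le {n n' : ℕ} (h : n ≤ n') :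
    goodPath Good n <+: goodPath Good n' := by
  induction h with
  | refl => exact List.prefix_refl _
  | step _ ih =>
    refine ih.trans ?_
    rw [goodPath]
    split
    · exact List.prefix_append _ _
    · exact List.prefix_refl _

theorem goodPath_good (h0 : Good []) (n : ℕ) : Good (goodPath Good n) := by
  induction n with
  | zero => exact h0
  | succ n ih =>
    rw [goodPath]
    split
    · next h => exact h.choose_spec
    · exact ih

theorem length_goodPath_succ {n : ℕ} (h : ∃ i, Good (goodPath Good n ++ [i])) :
    (goodPath Good (n + 1)).length = (goodPath Good n).length + 1 := by
  rw [goodPath, dif_pos h, List.length_append, List.length_singleton]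

end GoodPath

/-- A path that moves to a `Good` child whenever a node has one stops only at a leaf, so its
prefixes form a branch. -/
theorem Tableau.exists_branch_of_good (Good : List ℕ → Prop)
    (hnode : ∀ p, Good p → Tb.node p ≠ none) (hroot : Good [])
    (hstep : ∀ p, Good p → ∀ j, Tb.node (p ++ [j]) ≠ none → ∃ i, Good (p ++ [i])) :
    ∃ Br : Branch Tb, ∀ p ∈ Br.pos, ∃ q, Good q ∧ p <+: q := by
  have hgood : ∀ n, Good (goodPath Good n) := goodPath_good Good hroot
  refine ⟨⟨{p | ∃ n, p <+: goodPath Good n}, ?_, ?_, ?_, ?_⟩,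
    fun p ⟨n, hp⟩ => ⟨_, hgood n, hp⟩⟩
  · rintro p ⟨n, hp⟩
    exact Tb.node_ne_none_of_prefix hp (hnode _ (hgood n))
  · rintro p ⟨n, hp⟩ q ⟨n', hq⟩
    rcases le_total n n' with h | h
    · exact List.prefix_or_prefix_of_prefix (hp.trans (goodPath_prefix_of_le Good h)) hq
    · exact List.prefix_or_prefix_of_prefix hp (hq.trans (goodPath_prefix_of_le Good h))
  · rintro p ⟨n, hp⟩ q hqp
    exact ⟨n, hqp.trans hp⟩
  · intro q hq hcomp
    by_contra hqnot
    have hstrict : ∀ n, goodPath Good n <+: q ∧ goodPath Good n ≠ q := fun n =>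
      (hcomp _ ⟨n, List.prefix_refl _⟩).elim
        (fun h => ⟨h, fun he => hqnot ⟨n, he ▸ List.prefix_refl _⟩⟩)
        (fun h => absurd ⟨n, h⟩ hqnot)
    have hlen : ∀ n, n ≤ (goodPath Good n).length := by
      intro n
      induction n with
      | zero => exact Nat.zero_le _
      | succ n ih =>
        obtain ⟨j, hj⟩ := Tb.exists_child_of_prefix (hstrict n).1 (hstrict n).2 hq
        have := length_goodPath_succ Good (hstep _ (hgood n) j hj)
        omega
    have := (hstrict (q.length + 1)).1.length_le
    have := hlen (q.length + 1)
    omega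

theorem Tableau.exists_branch_forall_of_invariant (Q : TabFm m → Prop)
    (hroot : ∀ f ∈ initial N, Q f)
    (hstep : ∀ s ds, (∀ f ∈ s, Q f) → C s ds → ds ≠ [] →
      ∃ d ∈ ds, ∀ f ∈ d, Q f) :
    ∃ Br : Branch Tb, ∀ f ∈ Br.fmls, Q f := by
  set Good : List ℕ → Prop := fun p => ∃ s, Tb.node p = some s ∧ ∀ f ∈ s, Q f
  have hchild :
      ∀ p, Good p → ∀ j, Tb.node (p ++ [j]) ≠ none → ∃ i, Good (p ++ [i]) := by
    rintro p ⟨s, hp, hs⟩ j hj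
    rcases Tb.step p s hp with hleaf | ⟨ds, hC, hchildren⟩
    · exact absurd (hleaf j) hj
    · have hds : ds ≠ [] := by rintro rfl; simp [hchildren j] at hj
      obtain ⟨d, hd, hdQ⟩ := hstep s ds hs hC hds
      obtain ⟨i, hi⟩ := List.mem_iff_getElem?.1 hd
      refine ⟨i, s ∪ d, by rw [hchildren i, hi]; rfl, ?_⟩
      rintro f (hf | hf)
      exacts [hs f hf, hdQ f hf]
  obtain ⟨Br, hBr⟩ := Tb.exists_branch_of_good Good (fun p ⟨s, hp, _⟩ => by simp [hp])
    ⟨initial N, Tb.rootEq, hroot⟩ hchild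
  refine ⟨Br, ?_⟩
  rintro f ⟨p, hp, s, hps, hf⟩
  obtain ⟨q, ⟨t, hqt, htQ⟩, hpq⟩ := hBr p hp
  exact htQ f (Tb.subset_of_prefix hpq hps hqt hf)

end Branches

theorem Tableau.exists_open_branch_of_sat {m : ℕ} {N : Set (Fm m)}
    (Tb : Tableau m (RfKmIrr m) N) {M : KModel m} (hirr : ∀ a w, ¬ M.R a w w) {v : M.W}
    (hN : ∀ φ ∈ N, M.sat v φ) : ∃ Br : Branch Tb, Br.IsOpen := by
  obtain ⟨Br, hBr⟩ := Tb.exists_branch_forall_of_invariant (TabFm.Holds M (skolemInterp M v))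
    (by rintro _ ⟨φ, hφ, rfl⟩; exact hN φ hφ)
    (fun _ _ hs hC hds => RfKmIrr.exists_holds_of_holds hs hC hds)
  exact ⟨Br, RfKmIrr.not_closed_of_holds hirr hBr⟩

section Completeness

variable {m : ℕ} {B : Set (TabFm m)}

def branchModel (B : Set (TabFm m)) : LModel m where
  R a t t' := TabFm.TR a t t' ∈ B
  V p t := TabFm.T (.var p) t ∈ B

theorem branchModel_irrefl (hopen : ¬ RfKmIrr m B []) (a : Fin m) (t : Label m) :
    ¬ (branchModel B).R a t t :=
  fun h => hopen (RfKmIrr.irr h)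

theorem branchModel_sat_of_saturated (hopen : ¬ RfKmIrr m B [])
    (hsat : ∀ ds, RfKmIrr m B ds → ∃ d ∈ ds, d ⊆ B) (φ : Fm m) (t : Label m) :
    (TabFm.T φ t ∈ B → (branchModel B).sat (Lab B) t φ) ∧
      (TabFm.F φ t ∈ B → ¬ (branchModel B).sat (Lab B) t φ) := by
  have hsat₁ : ∀ {d}, RfKmIrr m B [d] → d ⊆ B := fun h => by
    obtain ⟨d, hd, hdB⟩ := hsat _ h
    rwa [List.mem_singleton.1 hd] at hdB
  induction φ generalizing t with
  | var p => exact ⟨id, fun hF hT => hopen (RfKmIrr.closeFm hT hF)⟩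
  | neg φ ih =>
    exact ⟨fun h => (ih t).2 (hsat₁ (RfKmIrr.negT h) rfl),
      fun h hn => hn ((ih t).1 (hsat₁ (RfKmIrr.negF h) rfl))⟩
  | or φ ψ ihφ ihψ =>
    constructor
    · intro h
      obtain ⟨d, hd, hdB⟩ := hsat _ (RfKmIrr.orT h)
      rcases List.mem_pair.1 hd with rfl | rfl
      exacts [Or.inl ((ihφ t).1 (hdB rfl)), Or.inr ((ihψ t).1 (hdB rfl))]
    · intro h
      have hdB := hsat₁ (RfKmIrr.orF h)
      exact not_or.2 ⟨(ihφ t).2 (hdB (.inl rfl)), (ihψ t).2 (hdB (.inr rfl))⟩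
  | box a φ ih =>
    constructor
    · intro h t' _ hR
      exact (ih t').1 (hsat₁ (RfKmIrr.box h hR) rfl)
    · intro h hbox
      have hdB := hsat₁ (RfKmIrr.dia h)
      have hR : TabFm.TR a t (.sk a φ t) ∈ B := hdB (.inl rfl)
      have hlab : Label.sk a φ t ∈ Lab B := .inr ⟨_, hR, .inr rfl⟩
      exact (ih _).2 (hdB (.inr rfl)) (hbox _ hlab hR)

theorem reflects_branchModel_of_saturated (hopen : ¬ RfKmIrr m B [])
    (hsat : ∀ ds, RfKmIrr m B ds → ∃ d ∈ ds, d ⊆ B) : Reflects (branchModel B) B :=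
  ⟨fun φ t => (branchModel_sat_of_saturated hopen hsat φ t).1,
    fun φ t => (branchModel_sat_of_saturated hopen hsat φ t).2,
    fun _ _ _ => id,
    fun _ _ _ hF hT => hopen (RfKmIrr.closeRel hT hF)⟩

end Completeness

/-- The calculus `Rf(box, T_{K_m})` extended with the closure rule
(irr): `T_R(r,x,x) / ⊥` is sound and constructively complete for `K_m` over the class of
models in which every relation `R_a` is irreflexive: if a finite set `N` of
`K_m`-formulas is satisfiable in a model with all relations irreflexive then every fully
expanded tableau for `N` in this calculus has an open branch, and from every open branch
`B` of a fully expanded tableau one can construct a `K_m`-model with all relations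
irreflexive, with domain the labels of `B`, in which every tableau formula of `B` is
true. -/
theorem RfKmIrr_sound_and_constructively_complete (m : ℕ) :
    (∀ N : Set (Fm m), N.Finite →
      (∃ (M : KModel m) (v : M.W), (∀ (a : Fin m) (w : M.W), ¬ M.R a w w) ∧
        ∀ φ ∈ N, M.sat v φ) →
      ∀ Tb : Tableau m (RfKmIrr m) N, Tb.Expanded → ∃ Br : Branch Tb, Br.IsOpen) ∧
    (∀ (N : Set (Fm m)) (Tb : Tableau m (RfKmIrr m) N), Tb.Expanded →
      ∀ Br : Branch Tb, Br.IsOpen →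
        ∃ M : LModel m, (∀ (a : Fin m), ∀ t ∈ Lab Br.fmls, ¬ M.R a t t) ∧
          Reflects M Br.fmls) :=
  ⟨fun _ _ ⟨_, _, hirr, hN⟩ Tb _ => Tb.exists_open_branch_of_sat hirr hN,
    fun _ _ hexp Br hopen => ⟨branchModel Br.fmls,
      fun a t _ => branchModel_irrefl hopen a t,
      reflects_branchModel_of_saturated hopen (hexp Br hopen)⟩⟩

end KmTableau
end

section
/- The calculus T_{K_m(¬)}^{c+}, obtained from T_{K_m(¬)} by replacing the rule (∨⁺) with the rules (split⁺_{mn}) for all m, n with m+n > 1: from T(¬p₁∨…∨¬p_m∨q₁∨…∨q_n, x) branch into F(p₁,x) | … | F(p_m,x) | T(q₁,x) | … | T(q_n,x), applicable only when p₁,…,p_m are propositional variables and none of q₁,…,q_n is a negated propositional variable (disjunction treated modulo associativity and commutativity), is sound and constructively complete for the logic K_m(¬). -/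
set_option autoImplicit false

namespace KmNotTableau

/-- Relation terms of the logic `K_m(¬)`: `α ::= a_1 | … | a_m | ¬α`. -/
inductive RTerm (m : ℕ) : Type
  | atom : Fin m → RTerm m
  | neg : RTerm m → RTerm m

/-- Formulas of the logic `K_m(¬)`: `φ ::= p | ¬φ | φ∨φ | [α]φ`. -/
inductive Fm (m : ℕ) : Type
  | var : ℕ → Fm m
  | neg : Fm m → Fm m
  | or : Fm m → Fm m → Fm m
  | box : RTerm m → Fm m → Fm m

/-- A `K_m(¬)`-model `M = (W, (R_a)_a, V)` with `W` nonempty. -/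
structure KModel (m : ℕ) where
  W : Type
  ne : Nonempty W
  R : Fin m → W → W → Prop
  V : ℕ → W → Prop

/-- Interpretation of relation terms: `R_{¬α} = (W×W) ∖ R_α`. -/
def KModel.RT {m : ℕ} (M : KModel m) : RTerm m → M.W → M.W → Prop
  | .atom a => M.R a
  | .neg α => fun v w => ¬ M.RT α v w

/-- Satisfaction in a `K_m(¬)`-model. -/
def KModel.sat {m : ℕ} (M : KModel m) : M.W → Fm m → Prop
  | v, .var p => M.V p v
  | v, .neg φ => ¬ M.sat v φ
  | v, .or φ ψ => M.sat v φ ∨ M.sat v ψ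
  | v, .box α φ => ∀ w, M.RT α v w → M.sat w φ

/-- A set of formulas is satisfiable if some model and world satisfy all its members. -/
def Satisfiable {m : ℕ} (N : Set (Fm m)) : Prop :=
  ∃ (M : KModel m) (v : M.W), ∀ φ ∈ N, M.sat v φ

/-- Labels: terms generated from the initial constant `a₀` and Skolem terms `f(α,φ,t)`. -/
inductive Label (m : ℕ) : Type
  | a0 : Label m
  | sk : RTerm m → Fm m → Label m → Label m

/-- Tableau formulas: `T(φ,t)`, `F(φ,t)`, `T_R(α,t,t')`, `F_R(α,t,t')`. -/
inductive TabFm (m : ℕ) : Type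
  | T : Fm m → Label m → TabFm m
  | F : Fm m → Label m → TabFm m
  | TR : RTerm m → Label m → Label m → TabFm m
  | FR : RTerm m → Label m → Label m → TabFm m

/-- The labels occurring in a tableau formula. -/
def TabFm.labels {m : ℕ} : TabFm m → Set (Label m)
  | .T _ t => {t}
  | .F _ t => {t}
  | .TR _ t t' => {t, t'}
  | .FR _ t t' => {t, t'}

/-- The labels occurring in a set of tableau formulas (the initial label `a₀`,
introduced at the root, always counts as occurring). -/
def Lab {m : ℕ} (B : Set (TabFm m)) : Set (Label m) :=
  insert Label.a0 {t | ∃ f ∈ B, t ∈ f.labels}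

/-- A calculus: `C s ds` holds if, on a branch whose set of formulas is `s`, some rule
of the calculus is applicable with denominator instances `ds` (a closure rule
application has `ds = []`). -/
abbrev Calc (m : ℕ) := Set (TabFm m) → List (Set (TabFm m)) → Prop

/-- The root node `{T(φ,a₀) | φ ∈ N}` of a tableau for input `N`. -/
def initial {m : ℕ} (N : Set (Fm m)) : Set (TabFm m) :=
  {f | ∃ φ ∈ N, f = TabFm.T φ Label.a0}

/-- A tableau for input `N` in calculus `C`: a finitely branching tree of sets of tableau
formulas (nodes indexed by positions `List ℕ`, children of `p` being `p ++ [i]`), whose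
root is `{T(φ,a₀) | φ ∈ N}`, and such that the children of every node are obtained by
applying a rule of `C`: each child adds one denominator instance to the node's set. -/
structure Tableau (m : ℕ) (C : Calc m) (N : Set (Fm m)) where
  node : List ℕ → Option (Set (TabFm m))
  rootEq : node [] = some (initial N)
  tree : ∀ (p : List ℕ) (i : ℕ), node (p ++ [i]) ≠ none → node p ≠ none
  step : ∀ (p : List ℕ) (s : Set (TabFm m)), node p = some s →
    (∀ i : ℕ, node (p ++ [i]) = none) ∨
    (∃ ds, C s ds ∧ ∀ i : ℕ, node (p ++ [i]) = (ds[i]?).map (fun d => s ∪ d))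

/-- A branch of a tableau: a maximal path from the root (represented by its
set of positions, a maximal chain under the prefix order). -/
structure Branch {m : ℕ} {C : Calc m} {N : Set (Fm m)} (Tb : Tableau m C N) where
  pos : Set (List ℕ)
  inTree : ∀ p ∈ pos, Tb.node p ≠ none
  chain : ∀ p ∈ pos, ∀ q ∈ pos, p <+: q ∨ q <+: p
  downClosed : ∀ p ∈ pos, ∀ q : List ℕ, q <+: p → q ∈ pos
  maximal : ∀ q : List ℕ, Tb.node q ≠ none → (∀ p ∈ pos, p <+: q ∨ q <+: p) → q ∈ pos

/-- The set of tableau formulas occurring on a branch. -/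
def Branch.fmls {m : ℕ} {C : Calc m} {N : Set (Fm m)} {Tb : Tableau m C N}
    (Br : Branch Tb) : Set (TabFm m) :=
  {f | ∃ p ∈ Br.pos, ∃ s, Tb.node p = some s ∧ f ∈ s}

/-- A branch is open if no closure rule has been applied (is applicable) on it. -/
def Branch.IsOpen {m : ℕ} {C : Calc m} {N : Set (Fm m)} {Tb : Tableau m C N}
    (Br : Branch Tb) : Prop := ¬ C Br.fmls []

/-- A tableau is fully expanded if on every open branch every applicable rule has been
applied, i.e. some denominator instance of the rule is already contained in the branch. -/
def Tableau.Expanded {m : ℕ} {C : Calc m} {N : Set (Fm m)} (Tb : Tableau m C N) : Prop :=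
  ∀ Br : Branch Tb, Br.IsOpen → ∀ ds, C Br.fmls ds → ∃ d ∈ ds, d ⊆ Br.fmls

/-- A `K_m(¬)`-model whose domain is (a set of) labels: the model `I(B)` constructed
from a branch has domain the set of labels occurring in `B`. -/
structure LModel (m : ℕ) where
  R : Fin m → Label m → Label m → Prop
  V : ℕ → Label m → Prop

/-- Interpretation of relation terms in a label model: `R_{¬α}` is the complement. -/
def LModel.RT {m : ℕ} (M : LModel m) : RTerm m → Label m → Label m → Prop
  | .atom a => M.R a
  | .neg α => fun t t' => ¬ M.RT α t t'

/-- Satisfaction in a label model relativised to its domain `D`. -/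
def LModel.sat {m : ℕ} (M : LModel m) (D : Set (Label m)) : Label m → Fm m → Prop
  | t, .var p => M.V p t
  | t, .neg φ => ¬ M.sat D t φ
  | t, .or φ ψ => M.sat D t φ ∨ M.sat D t ψ
  | t, .box α φ => ∀ t' ∈ D, M.RT α t t' → M.sat D t' φ

/-- Every tableau formula of `B` is true in the model `M` with domain `Lab B`:
`T(φ,t) ∈ B` implies `φ` holds at `t`; `F(φ,t) ∈ B` implies `φ` fails at `t`;
`T_R(α,t,t') ∈ B` implies `(t,t') ∈ R_α`; `F_R(α,t,t') ∈ B` implies `(t,t') ∉ R_α`. -/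
def Reflects {m : ℕ} (M : LModel m) (B : Set (TabFm m)) : Prop :=
  (∀ φ t, TabFm.T φ t ∈ B → M.sat (Lab B) t φ) ∧
  (∀ φ t, TabFm.F φ t ∈ B → ¬ M.sat (Lab B) t φ) ∧
  (∀ α t t', TabFm.TR α t t' ∈ B → M.RT α t t') ∧
  (∀ α t t', TabFm.FR α t t' ∈ B → ¬ M.RT α t t')

/-- The calculus `T_{K_m(¬)}`. -/
def TKmNot (m : ℕ) : Calc m := fun s ds =>
  -- (¬⁺) T(¬p,x) / F(p,x)
  (∃ φ x, TabFm.T (.neg φ) x ∈ s ∧ ds = [{TabFm.F φ x}]) ∨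
  -- (¬⁻) F(¬p,x) / T(p,x)
  (∃ φ x, TabFm.F (.neg φ) x ∈ s ∧ ds = [{TabFm.T φ x}]) ∨
  -- (∨⁺) T(p∨q,x) / T(p,x) | T(q,x)
  (∃ φ ψ x, TabFm.T (.or φ ψ) x ∈ s ∧ ds = [{TabFm.T φ x}, {TabFm.T ψ x}]) ∨
  -- (∨⁻) F(p∨q,x) / F(p,x), F(q,x)
  (∃ φ ψ x, TabFm.F (.or φ ψ) x ∈ s ∧ ds = [{TabFm.F φ x, TabFm.F ψ x}]) ∨
  -- (box) T([r]p,x) / F_R(r,x,y) | T(p,y), for any label y occurring on the branch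
  (∃ α φ x y, TabFm.T (.box α φ) x ∈ s ∧ y ∈ Lab s ∧
    ds = [{TabFm.FR α x y}, {TabFm.T φ y}]) ∨
  -- (dia) F([r]p,x) / T_R(r,x,f(r,p,x)), F(p,f(r,p,x))
  (∃ α φ x, TabFm.F (.box α φ) x ∈ s ∧
    ds = [{TabFm.TR α x (Label.sk α φ x), TabFm.F φ (Label.sk α φ x)}]) ∨
  -- closure rules
  (∃ φ x, TabFm.T φ x ∈ s ∧ TabFm.F φ x ∈ s ∧ ds = []) ∨
  (∃ α x y, TabFm.TR α x y ∈ s ∧ TabFm.FR α x y ∈ s ∧ ds = []) ∨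
  -- (¬R⁺) T_R(¬r,x,y) / F_R(r,x,y)
  (∃ α x y, TabFm.TR (.neg α) x y ∈ s ∧ ds = [{TabFm.FR α x y}]) ∨
  -- (¬R⁻) F_R(¬r,x,y) / T_R(r,x,y)
  (∃ α x y, TabFm.FR (.neg α) x y ∈ s ∧ ds = [{TabFm.TR α x y}])

/-- The multiset of disjuncts of a formula (disjunction treated modulo associativity
and commutativity). -/
def disjuncts {m : ℕ} : Fm m → Multiset (Fm m)
  | .or φ ψ => disjuncts φ + disjuncts ψ
  | φ => {φ}

/-- The calculus `T_{K_m(¬)}^{c+}`: `T_{K_m(¬)}` with the rule (∨⁺) replaced by the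
rules (split⁺_{mn}), `m + n > 1`: from `T(¬p₁∨…∨¬p_m∨q₁∨…∨q_n, x)` branch into
`F(p₁,x) | … | F(p_m,x) | T(q₁,x) | … | T(q_n,x)`, applicable only when `p₁,…,p_m` are
propositional variables and none of `q₁,…,q_n` is a negated propositional variable. -/
def TKmNotSplitPlus (m : ℕ) : Calc m := fun s ds =>
  (∃ φ x, TabFm.T (.neg φ) x ∈ s ∧ ds = [{TabFm.F φ x}]) ∨
  (∃ φ x, TabFm.F (.neg φ) x ∈ s ∧ ds = [{TabFm.T φ x}]) ∨
  -- (split⁺_{mn})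
  (∃ (φ : Fm m) (x : Label m) (ps : Multiset ℕ) (qs : Multiset (Fm m)),
    TabFm.T φ x ∈ s ∧
    disjuncts φ = ps.map (fun p => Fm.neg (Fm.var p)) + qs ∧
    (∀ q ∈ qs, ∀ p : ℕ, q ≠ Fm.neg (Fm.var p)) ∧
    2 ≤ Multiset.card ps + Multiset.card qs ∧
    ds = ps.toList.map (fun p => {TabFm.F (Fm.var p) x}) ++
         qs.toList.map (fun q => {TabFm.T q x})) ∨
  (∃ φ ψ x, TabFm.F (.or φ ψ) x ∈ s ∧ ds = [{TabFm.F φ x, TabFm.F ψ x}]) ∨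
  (∃ α φ x y, TabFm.T (.box α φ) x ∈ s ∧ y ∈ Lab s ∧
    ds = [{TabFm.FR α x y}, {TabFm.T φ y}]) ∨
  (∃ α φ x, TabFm.F (.box α φ) x ∈ s ∧
    ds = [{TabFm.TR α x (Label.sk α φ x), TabFm.F φ (Label.sk α φ x)}]) ∨
  (∃ φ x, TabFm.T φ x ∈ s ∧ TabFm.F φ x ∈ s ∧ ds = []) ∨
  (∃ α x y, TabFm.TR α x y ∈ s ∧ TabFm.FR α x y ∈ s ∧ ds = []) ∨
  (∃ α x y, TabFm.TR (.neg α) x y ∈ s ∧ ds = [{TabFm.FR α x y}]) ∨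
  (∃ α x y, TabFm.FR (.neg α) x y ∈ s ∧ ds = [{TabFm.TR α x y}])

/-! ### Auxiliary machinery -/

attribute [local instance] Classical.propDecidable

section Aux

variable {m : ℕ}

/-- Test whether a formula is a negated propositional variable. -/
def negVar? : Fm m → Option ℕ
  | .neg (.var p) => some p
  | _ => none

lemma negVar?_eq_some {φ : Fm m} {p : ℕ} (h : negVar? φ = some p) :
    φ = .neg (.var p) := by
  cases φ with
  | neg ψ => cases ψ <;> simp_all [negVar?]
  | _ => simp_all [negVar?]

lemma negVar?_negvar (p : ℕ) : negVar? (Fm.neg (Fm.var p) : Fm m) = some p := rfl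

lemma negVar?_eq_none {φ : Fm m} (h : ∀ p : ℕ, φ ≠ .neg (.var p)) :
    negVar? φ = none := by
  cases hn : negVar? φ with
  | none => rfl
  | some p => exact absurd (negVar?_eq_some hn) (h p)

/-- Decomposition of any multiset of formulas into negated variables and the rest. -/
lemma decomp (s : Multiset (Fm m)) :
    s = (s.filterMap negVar?).map (fun p => Fm.neg (Fm.var p)) +
        s.filter (fun q => ∀ p : ℕ, q ≠ Fm.neg (Fm.var p)) := by
  induction s using Multiset.induction_on with
  | empty => simp
  | cons a s ih =>
    by_cases h : ∃ p : ℕ, a = Fm.neg (Fm.var p)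
    · obtain ⟨p, rfl⟩ := h
      rw [Multiset.filterMap_cons_some _ _ _ (negVar?_negvar p),
        Multiset.filter_cons_of_neg, Multiset.map_cons, Multiset.cons_add]
      · exact congrArg _ ih
      · push_neg; exact ⟨p, rfl⟩
    · push_neg at h
      rw [Multiset.filterMap_cons_none _ _ (negVar?_eq_none h),
        Multiset.filter_cons_of_pos _ h]
      calc a ::ₘ s
          = a ::ₘ ((s.filterMap negVar?).map (fun p => Fm.neg (Fm.var p)) +
              s.filter (fun q => ∀ p : ℕ, q ≠ Fm.neg (Fm.var p))) := congrArg _ ih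
        _ = _ := by rw [Multiset.add_cons]

lemma one_le_card_disjuncts (φ : Fm m) : 1 ≤ Multiset.card (disjuncts φ) := by
  induction φ with
  | or φ ψ ihφ ihψ => simp only [disjuncts, Multiset.card_add]; omega
  | var p => simp [disjuncts]
  | neg φ _ => simp [disjuncts]
  | box α φ _ => simp [disjuncts]

/-- Size of a formula. -/
def fsize : Fm m → ℕ
  | .var _ => 1
  | .neg φ => fsize φ + 1
  | .or φ ψ => fsize φ + fsize ψ + 1
  | .box _ φ => fsize φ + 1

lemma one_le_fsize (φ : Fm m) : 1 ≤ fsize φ := by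
  cases φ <;> simp [fsize]

lemma fsize_le_of_mem_disjuncts {δ φ : Fm m} (h : δ ∈ disjuncts φ) :
    fsize δ ≤ fsize φ := by
  induction φ with
  | or φ ψ ihφ ihψ =>
    simp only [disjuncts, Multiset.mem_add] at h
    rcases h with h | h
    · have := ihφ h; simp [fsize]; omega
    · have := ihψ h; simp [fsize]; omega
  | var p => rw [show disjuncts (Fm.var p : Fm m) = {Fm.var p} from rfl,
      Multiset.mem_singleton] at h; subst h; rfl
  | neg φ _ => rw [show disjuncts (Fm.neg φ) = {Fm.neg φ} from rfl,
      Multiset.mem_singleton] at h; subst h; rfl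
  | box α φ _ => rw [show disjuncts (Fm.box α φ) = {Fm.box α φ} from rfl,
      Multiset.mem_singleton] at h; subst h; rfl

lemma fsize_lt_of_mem_disjuncts_or {δ φ ψ : Fm m} (h : δ ∈ disjuncts (Fm.or φ ψ)) :
    fsize δ < fsize (Fm.or φ ψ) := by
  simp only [disjuncts, Multiset.mem_add] at h
  rcases h with h | h
  · have := fsize_le_of_mem_disjuncts h; simp [fsize]; omega
  · have := fsize_le_of_mem_disjuncts h; simp [fsize]; omega

/-- Satisfaction of a disjunct implies satisfaction of the disjunction (label models). -/
lemma LModel.sat_of_disjunct (M : LModel m) (D : Set (Label m)) {φ δ : Fm m} {t : Label m}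
    (hδ : δ ∈ disjuncts φ) (h : M.sat D t δ) : M.sat D t φ := by
  induction φ with
  | or φ ψ ihφ ihψ =>
    simp only [disjuncts, Multiset.mem_add] at hδ
    rcases hδ with hδ | hδ
    · exact Or.inl (ihφ hδ)
    · exact Or.inr (ihψ hδ)
  | var p => rw [show disjuncts (Fm.var p : Fm m) = {Fm.var p} from rfl,
      Multiset.mem_singleton] at hδ; subst hδ; exact h
  | neg φ _ => rw [show disjuncts (Fm.neg φ) = {Fm.neg φ} from rfl,
      Multiset.mem_singleton] at hδ; subst hδ; exact h
  | box α φ _ => rw [show disjuncts (Fm.box α φ) = {Fm.box α φ} from rfl,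
      Multiset.mem_singleton] at hδ; subst hδ; exact h

/-- A satisfied formula has a satisfied disjunct (standard models). -/
lemma KModel.exists_disjunct_sat (M : KModel m) {v : M.W} {φ : Fm m}
    (h : M.sat v φ) : ∃ δ ∈ disjuncts φ, M.sat v δ := by
  induction φ with
  | or φ ψ ihφ ihψ =>
    rcases h with h | h
    · obtain ⟨δ, hδ, hs⟩ := ihφ h
      exact ⟨δ, by simp only [disjuncts, Multiset.mem_add]; exact Or.inl hδ, hs⟩
    · obtain ⟨δ, hδ, hs⟩ := ihψ h
      exact ⟨δ, by simp only [disjuncts, Multiset.mem_add]; exact Or.inr hδ, hs⟩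
  | var p => exact ⟨_, by rw [show disjuncts (Fm.var p : Fm m) = {Fm.var p} from rfl]; simp, h⟩
  | neg φ _ => exact ⟨_, by rw [show disjuncts (Fm.neg φ) = {Fm.neg φ} from rfl]; simp, h⟩
  | box α φ _ => exact ⟨_, by rw [show disjuncts (Fm.box α φ) = {Fm.box α φ} from rfl]; simp, h⟩

end Aux

/-! ### Completeness: the model constructed from an open branch -/

section Completeness

variable {m : ℕ}

/-- The model `I(B)` read off a set of tableau formulas. -/
def modelOf (B : Set (TabFm m)) : LModel m where
  R := fun a t t' => TabFm.TR (.atom a) t t' ∈ B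
  V := fun p t => TabFm.T (.var p) t ∈ B

variable {B : Set (TabFm m)}

lemma rt_reflect (hcl : ¬ TKmNotSplitPlus m B [])
    (hex : ∀ ds, TKmNotSplitPlus m B ds → ∃ d ∈ ds, d ⊆ B) :
    ∀ (α : RTerm m) (t t' : Label m),
      (TabFm.TR α t t' ∈ B → (modelOf B).RT α t t') ∧
      (TabFm.FR α t t' ∈ B → ¬ (modelOf B).RT α t t') := by
  intro α
  induction α with
  | atom a =>
    intro t t'
    refine ⟨fun h => h, fun hF hT => ?_⟩
    exact hcl (Or.inr (Or.inr (Or.inr (Or.inr (Or.inr (Or.inr (Or.inr (Or.inl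
      ⟨.atom a, t, t', hT, hF, rfl⟩))))))))
  | neg α ih =>
    intro t t'
    constructor
    · intro h
      have happ : TKmNotSplitPlus m B [{TabFm.FR α t t'}] :=
        Or.inr (Or.inr (Or.inr (Or.inr (Or.inr (Or.inr (Or.inr (Or.inr (Or.inl
          ⟨α, t, t', h, rfl⟩))))))))
      obtain ⟨d, hd, hsub⟩ := hex _ happ
      simp only [List.mem_singleton] at hd; subst hd
      have hFR : TabFm.FR α t t' ∈ B := hsub rfl
      exact (ih t t').2 hFR
    · intro h hRT
      have happ : TKmNotSplitPlus m B [{TabFm.TR α t t'}] :=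
        Or.inr (Or.inr (Or.inr (Or.inr (Or.inr (Or.inr (Or.inr (Or.inr (Or.inr
          ⟨α, t, t', h, rfl⟩))))))))
      obtain ⟨d, hd, hsub⟩ := hex _ happ
      simp only [List.mem_singleton] at hd; subst hd
      have hTR : TabFm.TR α t t' ∈ B := hsub rfl
      exact hRT ((ih t t').1 hTR)

lemma noTF (hcl : ¬ TKmNotSplitPlus m B []) {φ : Fm m} {t : Label m}
    (hT : TabFm.T φ t ∈ B) (hF : TabFm.F φ t ∈ B) : False :=
  hcl (Or.inr (Or.inr (Or.inr (Or.inr (Or.inr (Or.inr (Or.inl ⟨φ, t, hT, hF, rfl⟩)))))))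

lemma sat_reflect (hcl : ¬ TKmNotSplitPlus m B [])
    (hex : ∀ ds, TKmNotSplitPlus m B ds → ∃ d ∈ ds, d ⊆ B) :
    ∀ (n : ℕ) (φ : Fm m), fsize φ ≤ n → ∀ t : Label m,
      (TabFm.T φ t ∈ B → (modelOf B).sat (Lab B) t φ) ∧
      (TabFm.F φ t ∈ B → ¬ (modelOf B).sat (Lab B) t φ) := by
  intro n
  induction n with
  | zero => intro φ h; have := one_le_fsize φ; omega
  | succ n ih =>
    intro φ hφ t
    cases φ with
    | var p =>
      refine ⟨fun h => h, fun hF hs => ?_⟩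
      exact noTF hcl hs hF
    | neg φ =>
      simp only [fsize] at hφ
      constructor
      · intro h
        have happ : TKmNotSplitPlus m B [{TabFm.F φ t}] := Or.inl ⟨φ, t, h, rfl⟩
        obtain ⟨d, hd, hsub⟩ := hex _ happ
        simp only [List.mem_singleton] at hd; subst hd
        exact (ih φ (by omega) t).2 (hsub rfl)
      · intro h hs
        have happ : TKmNotSplitPlus m B [{TabFm.T φ t}] :=
          Or.inr (Or.inl ⟨φ, t, h, rfl⟩)
        obtain ⟨d, hd, hsub⟩ := hex _ happ
        simp only [List.mem_singleton] at hd; subst hd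
        exact hs ((ih φ (by omega) t).1 (hsub rfl))
    | or φ ψ =>
      simp only [fsize] at hφ
      constructor
      · intro h
        -- split rule
        set s := disjuncts (Fm.or φ ψ) with hs
        set ps := s.filterMap negVar? with hps
        set qs := s.filter (fun q => ∀ p : ℕ, q ≠ Fm.neg (Fm.var p)) with hqs
        have hdec : disjuncts (Fm.or φ ψ) =
            ps.map (fun p => Fm.neg (Fm.var p)) + qs := decomp s
        have hcard : 2 ≤ Multiset.card ps + Multiset.card qs := by
          have h1 := one_le_card_disjuncts φ
          have h2 := one_le_card_disjuncts ψ
          have : Multiset.card s = Multiset.card ps + Multiset.card qs := by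
            conv_lhs => rw [hs, hdec]
            simp [Multiset.card_add, Multiset.card_map]
          have hscard : Multiset.card s =
              Multiset.card (disjuncts φ) + Multiset.card (disjuncts ψ) := by
            simp [hs, disjuncts, Multiset.card_add]
          omega
        have happ : TKmNotSplitPlus m B
            (ps.toList.map (fun p => {TabFm.F (Fm.var p) t}) ++
             qs.toList.map (fun q => {TabFm.T q t})) :=
          Or.inr (Or.inr (Or.inl ⟨Fm.or φ ψ, t, ps, qs, h, hdec,
            fun q hq p => Multiset.of_mem_filter hq p, hcard, rfl⟩))
        obtain ⟨d, hd, hsub⟩ := hex _ happ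
        rcases List.mem_append.1 hd with hd | hd
        · obtain ⟨p, hp, rfl⟩ := List.mem_map.1 hd
          have hp' : p ∈ ps := Multiset.mem_toList.1 hp
          obtain ⟨a, ha, hval⟩ := (Multiset.mem_filterMap _ _).1 hp'
          have haeq : a = Fm.neg (Fm.var p) := negVar?_eq_some hval
          subst haeq
          have hF : TabFm.F (Fm.var p) t ∈ B := hsub rfl
          refine (modelOf B).sat_of_disjunct (Lab B) ha ?_
          intro hv
          exact noTF hcl hv hF
        · obtain ⟨q, hq, rfl⟩ := List.mem_map.1 hd
          have hq' : q ∈ qs := Multiset.mem_toList.1 hq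
          have hqin : q ∈ s := Multiset.mem_of_mem_filter hq'
          have hT : TabFm.T q t ∈ B := hsub rfl
          have hsize : fsize q ≤ n := by
            have := fsize_lt_of_mem_disjuncts_or (φ := φ) (ψ := ψ) hqin
            simp only [fsize] at this; omega
          exact (modelOf B).sat_of_disjunct (Lab B) hqin ((ih q hsize t).1 hT)
      · intro h
        have happ : TKmNotSplitPlus m B [{TabFm.F φ t, TabFm.F ψ t}] :=
          Or.inr (Or.inr (Or.inr (Or.inl ⟨φ, ψ, t, h, rfl⟩)))
        obtain ⟨d, hd, hsub⟩ := hex _ happ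
        simp only [List.mem_singleton] at hd; subst hd
        have h1 : TabFm.F φ t ∈ B := hsub (Or.inl rfl)
        have h2 : TabFm.F ψ t ∈ B := hsub (Or.inr rfl)
        intro hs
        rcases hs with hs | hs
        · exact (ih φ (by omega) t).2 h1 hs
        · exact (ih ψ (by omega) t).2 h2 hs
    | box α φ =>
      simp only [fsize] at hφ
      constructor
      · intro h
        intro t' ht' hrt
        have happ : TKmNotSplitPlus m B [{TabFm.FR α t t'}, {TabFm.T φ t'}] :=
          Or.inr (Or.inr (Or.inr (Or.inr (Or.inl ⟨α, φ, t, t', h, ht', rfl⟩))))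
        obtain ⟨d, hd, hsub⟩ := hex _ happ
        simp only [List.mem_cons, List.mem_singleton, List.not_mem_nil, or_false] at hd
        rcases hd with rfl | rfl
        · exact absurd hrt ((rt_reflect hcl hex α t t').2 (hsub rfl))
        · exact (ih φ (by omega) t').1 (hsub rfl)
      · intro h
        have happ : TKmNotSplitPlus m B
            [{TabFm.TR α t (Label.sk α φ t), TabFm.F φ (Label.sk α φ t)}] :=
          Or.inr (Or.inr (Or.inr (Or.inr (Or.inr (Or.inl ⟨α, φ, t, h, rfl⟩)))))
        obtain ⟨d, hd, hsub⟩ := hex _ happ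
        simp only [List.mem_singleton] at hd; subst hd
        have hTR : TabFm.TR α t (Label.sk α φ t) ∈ B := hsub (Or.inl rfl)
        have hF : TabFm.F φ (Label.sk α φ t) ∈ B := hsub (Or.inr rfl)
        intro hs
        have hmem : Label.sk α φ t ∈ Lab B :=
          Or.inr ⟨TabFm.TR α t (Label.sk α φ t), hTR, Or.inr rfl⟩
        exact (ih φ (by omega) _).2 hF
          (hs _ hmem ((rt_reflect hcl hex α t _).1 hTR))

/-- The core of constructive completeness. -/
lemma reflects_of_open (hcl : ¬ TKmNotSplitPlus m B [])
    (hex : ∀ ds, TKmNotSplitPlus m B ds → ∃ d ∈ ds, d ⊆ B) :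
    Reflects (modelOf B) B := by
  refine ⟨fun φ t h => (sat_reflect hcl hex (fsize φ) φ le_rfl t).1 h,
          fun φ t h => (sat_reflect hcl hex (fsize φ) φ le_rfl t).2 h,
          fun α t t' h => (rt_reflect hcl hex α t t').1 h,
          fun α t t' h => (rt_reflect hcl hex α t t').2 h⟩

end Completeness

/-! ### Soundness -/

section Soundness

variable {m : ℕ}

/-- Interpretation of labels in a model, using Skolem witnesses when they exist. -/
noncomputable def interp (M : KModel m) (v : M.W) : Label m → M.W
  | .a0 => v
  | .sk α φ t =>
      if h : ∃ w, M.RT α (interp M v t) w ∧ ¬ M.sat w φ then h.choose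
      else Classical.choice M.ne

/-- A tableau formula is true under the interpretation. -/
def GoodF (M : KModel m) (v : M.W) : TabFm m → Prop
  | .T φ t => M.sat (interp M v t) φ
  | .F φ t => ¬ M.sat (interp M v t) φ
  | .TR α t t' => M.RT α (interp M v t) (interp M v t')
  | .FR α t t' => ¬ M.RT α (interp M v t) (interp M v t')

def Good (M : KModel m) (v : M.W) (s : Set (TabFm m)) : Prop :=
  ∀ f ∈ s, GoodF M v f

lemma good_initial (M : KModel m) (v : M.W) {N : Set (Fm m)}
    (hN : ∀ φ ∈ N, M.sat v φ) : Good M v (initial N) := by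
  rintro f ⟨φ, hφ, rfl⟩
  exact hN φ hφ

/-- The key local soundness property: from a good set, every applicable rule has a
good denominator instance. -/
lemma step_good (M : KModel m) (v : M.W) {s : Set (TabFm m)} {ds : List (Set (TabFm m))}
    (hg : Good M v s) (hC : TKmNotSplitPlus m s ds) :
    ∃ d ∈ ds, Good M v (s ∪ d) := by
  have aux : ∀ d ∈ ds, Good M v d → Good M v (s ∪ d) := by
    intro d _ hd f hf
    rcases hf with hf | hf
    · exact hg f hf
    · exact hd f hf
  rcases hC with ⟨φ, x, hmem, rfl⟩ | ⟨φ, x, hmem, rfl⟩ | hsplit |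
      ⟨φ, ψ, x, hmem, rfl⟩ | ⟨α, φ, x, y, hmem, _, rfl⟩ | ⟨α, φ, x, hmem, rfl⟩ |
      ⟨φ, x, hT, hF, rfl⟩ | ⟨α, x, y, hT, hF, rfl⟩ |
      ⟨α, x, y, hmem, rfl⟩ | ⟨α, x, y, hmem, rfl⟩
  · -- (¬⁺)
    refine ⟨_, List.mem_singleton.2 rfl, aux _ (List.mem_singleton.2 rfl) ?_⟩
    rintro f rfl
    have := hg _ hmem
    simpa [GoodF, KModel.sat] using this
  · -- (¬⁻)
    refine ⟨_, List.mem_singleton.2 rfl, aux _ (List.mem_singleton.2 rfl) ?_⟩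
    rintro f rfl
    have := hg _ hmem
    simpa [GoodF, KModel.sat] using this
  · -- (split)
    obtain ⟨φ, x, ps, qs, hmem, hdec, hqs, hcard, rfl⟩ := hsplit
    have hsat : M.sat (interp M v x) φ := hg _ hmem
    obtain ⟨δ, hδ, hδs⟩ := M.exists_disjunct_sat hsat
    rw [hdec, Multiset.mem_add] at hδ
    rcases hδ with hδ | hδ
    · obtain ⟨p, hp, rfl⟩ := Multiset.mem_map.1 hδ
      refine ⟨{TabFm.F (Fm.var p) x}, ?_, aux _ ?_ ?_⟩
      · exact List.mem_append_left _
          (List.mem_map.2 ⟨p, Multiset.mem_toList.2 hp, rfl⟩)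
      · exact List.mem_append_left _
          (List.mem_map.2 ⟨p, Multiset.mem_toList.2 hp, rfl⟩)
      · rintro f rfl
        exact hδs
    · refine ⟨{TabFm.T δ x}, ?_, aux _ ?_ ?_⟩
      · exact List.mem_append_right _
          (List.mem_map.2 ⟨δ, Multiset.mem_toList.2 hδ, rfl⟩)
      · exact List.mem_append_right _
          (List.mem_map.2 ⟨δ, Multiset.mem_toList.2 hδ, rfl⟩)
      · rintro f rfl
        exact hδs
  · -- (∨⁻)
    refine ⟨_, List.mem_singleton.2 rfl, aux _ (List.mem_singleton.2 rfl) ?_⟩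
    have hgm : ¬ M.sat (interp M v x) (Fm.or φ ψ) := hg _ hmem
    rintro f (rfl | rfl)
    · exact fun hs => hgm (Or.inl hs)
    · exact fun hs => hgm (Or.inr hs)
  · -- (box)
    have hgm : M.sat (interp M v x) (Fm.box α φ) := hg _ hmem
    by_cases hr : M.RT α (interp M v x) (interp M v y)
    · refine ⟨{TabFm.T φ y}, by simp, aux _ (by simp) ?_⟩
      rintro f rfl
      exact hgm _ hr
    · refine ⟨{TabFm.FR α x y}, by simp, aux _ (by simp) ?_⟩
      rintro f rfl
      exact hr
  · -- (dia)
    have hgm : ¬ M.sat (interp M v x) (Fm.box α φ) := hg _ hmem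
    have hE : ∃ w, M.RT α (interp M v x) w ∧ ¬ M.sat w φ := by
      by_contra hh
      push_neg at hh
      exact hgm (fun w hw => hh w hw)
    have hsk : interp M v (Label.sk α φ x) = hE.choose := by
      rw [interp, dif_pos hE]
    refine ⟨_, List.mem_singleton.2 rfl, aux _ (List.mem_singleton.2 rfl) ?_⟩
    rintro f (rfl | rfl)
    · show M.RT α (interp M v x) (interp M v (Label.sk α φ x))
      rw [hsk]; exact hE.choose_spec.1
    · show ¬ M.sat (interp M v (Label.sk α φ x)) φ
      rw [hsk]; exact hE.choose_spec.2
  · -- closure T/F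
    exact absurd (hg _ hT) (hg _ hF)
  · -- closure TR/FR
    exact absurd (hg _ hT) (hg _ hF)
  · -- (¬R⁺)
    refine ⟨_, List.mem_singleton.2 rfl, aux _ (List.mem_singleton.2 rfl) ?_⟩
    rintro f rfl
    have := hg _ hmem
    simpa [GoodF, KModel.RT] using this
  · -- (¬R⁻)
    refine ⟨_, List.mem_singleton.2 rfl, aux _ (List.mem_singleton.2 rfl) ?_⟩
    rintro f rfl
    have := hg _ hmem
    simpa [GoodF, KModel.RT] using this

variable {C : Calc m} {N : Set (Fm m)}

/-- If a node is in the tree, so is every node on the path to it. -/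
lemma node_ne_none_of_append (Tb : Tableau m C N) :
    ∀ (t p : List ℕ), Tb.node (p ++ t) ≠ none → Tb.node p ≠ none := by
  intro t
  induction t using List.reverseRecOn with
  | nil => intro p h; simpa using h
  | append_singleton t i ih =>
    intro p h
    rw [show p ++ (t ++ [i]) = (p ++ t) ++ [i] by simp] at h
    exact ih p (Tb.tree _ _ h)

lemma node_ne_none_of_prefix (Tb : Tableau m C N) {p q : List ℕ}
    (hpq : p <+: q) (h : Tb.node q ≠ none) : Tb.node p ≠ none := by
  obtain ⟨t, rfl⟩ := hpq
  exact node_ne_none_of_append Tb t p h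

/-- Sets of formulas grow along branches. -/
lemma node_subset_of_prefix (Tb : Tableau m C N) :
    ∀ (t p : List ℕ) (s s' : Set (TabFm m)), Tb.node p = some s →
      Tb.node (p ++ t) = some s' → s ⊆ s' := by
  intro t
  induction t using List.reverseRecOn with
  | nil => intro p s s' h h'; rw [List.append_nil, h] at h'; cases h'; exact le_rfl
  | append_singleton t i ih =>
    intro p s s' h h'
    rw [show p ++ (t ++ [i]) = (p ++ t) ++ [i] by simp] at h'
    have hmid : Tb.node (p ++ t) ≠ none :=
      Tb.tree _ _ (by rw [h']; exact fun hc => by cases hc)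
    obtain ⟨sm, hsm⟩ := Option.ne_none_iff_exists'.1 hmid
    have hsub : s ⊆ sm := ih p s sm h hsm
    rcases Tb.step _ _ hsm with hall | ⟨ds, _, hch⟩
    · rw [hall i] at h'; cases h'
    · rw [hch i] at h'
      cases hd : ds[i]? with
      | none => rw [hd] at h'; cases h'
      | some d =>
        rw [hd] at h'
        cases h'
        exact hsub.trans Set.subset_union_left

/-- The good path through a tableau. -/
noncomputable def gpath (Tb : Tableau m C N) (G : Set (TabFm m) → Prop) : ℕ → List ℕ
  | 0 => []
  | n + 1 =>
      let p := gpath Tb G n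
      if h : ∃ i s', Tb.node (p ++ [i]) = some s' ∧ G s' then p ++ [h.choose] else p

section Path

variable {m : ℕ} {C : Calc m} {N : Set (Fm m)} (Tb : Tableau m C N)
  (G : Set (TabFm m) → Prop)

lemma gpath_inv (hroot : G (initial N)) :
    ∀ n, ∃ s, Tb.node (gpath Tb G n) = some s ∧ G s := by
  intro n
  induction n with
  | zero => exact ⟨initial N, Tb.rootEq, hroot⟩
  | succ n ih =>
    simp only [gpath]
    by_cases h : ∃ i s', Tb.node (gpath Tb G n ++ [i]) = some s' ∧ G s'
    · rw [dif_pos h]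
      exact h.choose_spec
    · rw [dif_neg h]
      exact ih

lemma gpath_leaf (hgood : ∀ s ds, G s → C s ds → ∃ d ∈ ds, G (s ∪ d))
    {p : List ℕ} {s : Set (TabFm m)} (hn : Tb.node p = some s) (hg : G s)
    (hnone : ¬ ∃ i s', Tb.node (p ++ [i]) = some s' ∧ G s') :
    ∀ i, Tb.node (p ++ [i]) = none := by
  rcases Tb.step _ _ hn with hall | ⟨ds, hC, hch⟩
  · exact hall
  · exfalso
    obtain ⟨d, hd, hgd⟩ := hgood s ds hg hC
    obtain ⟨i, hilt, hi⟩ := List.getElem_of_mem hd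
    refine hnone ⟨i, s ∪ d, ?_, hgd⟩
    rw [hch i, List.getElem?_eq_getElem hilt, hi, Option.map_some]

lemma gpath_length
    (hcond : ∀ k, ∃ i s', Tb.node (gpath Tb G k ++ [i]) = some s' ∧ G s') :
    ∀ n, (gpath Tb G n).length = n := by
  intro n
  induction n with
  | zero => rfl
  | succ n ih =>
    simp only [gpath]
    rw [dif_pos (hcond n)]
    simp [ih]

lemma gpath_prefix_succ (n : ℕ) : gpath Tb G n <+: gpath Tb G (n + 1) := by
  simp only [gpath]
  by_cases h : ∃ i s', Tb.node (gpath Tb G n ++ [i]) = some s' ∧ G s'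
  · rw [dif_pos h]; exact ⟨[h.choose], rfl⟩
  · rw [dif_neg h]

lemma gpath_mono {n k : ℕ} (h : n ≤ k) : gpath Tb G n <+: gpath Tb G k := by
  induction k with
  | zero => rw [Nat.le_zero.1 h]
  | succ k ih =>
    rcases Nat.lt_or_ge n (k + 1) with hlt | hge
    · exact (ih (Nat.lt_succ_iff.1 hlt)).trans (gpath_prefix_succ Tb G k)
    · rw [Nat.le_antisymm h hge]

end Path

end Soundness

/-- The calculus `T_{K_m(¬)}^{c+}`, obtained from `T_{K_m(¬)}` by
replacing the rule (∨⁺) with the rules (split⁺_{mn}) for all `m, n` with `m + n > 1`,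
is sound and constructively complete for the logic `K_m(¬)`. -/
theorem TKmNotSplitPlus_sound_and_constructively_complete (m : ℕ) :
    (∀ N : Set (Fm m), N.Finite → Satisfiable N →
      ∀ Tb : Tableau m (TKmNotSplitPlus m) N, Tb.Expanded →
        ∃ Br : Branch Tb, Br.IsOpen) ∧
    (∀ (N : Set (Fm m)) (Tb : Tableau m (TKmNotSplitPlus m) N), Tb.Expanded →
      ∀ Br : Branch Tb, Br.IsOpen → ∃ M : LModel m, Reflects M Br.fmls) := by
  constructor
  · -- Soundness
    rintro N _hfin ⟨M, v, hsatN⟩ Tb _hexp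
    set G : Set (TabFm m) → Prop := Good M v with hG
    have hroot : G (initial N) := good_initial M v hsatN
    have hgood : ∀ s ds, G s → TKmNotSplitPlus m s ds → ∃ d ∈ ds, G (s ∪ d) :=
      fun s ds hg hC => step_good M v hg hC
    have hinv := gpath_inv Tb G hroot
    -- the branch following the good path
    refine ⟨⟨{q | ∃ n, q <+: gpath Tb G n}, ?_, ?_, ?_, ?_⟩, ?_⟩
    · rintro p ⟨n, hp⟩
      obtain ⟨s, hn, _⟩ := hinv n
      exact node_ne_none_of_prefix Tb hp (by rw [hn]; exact fun hc => by cases hc)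
    · rintro p ⟨n, hp⟩ q ⟨k, hq⟩
      exact List.prefix_or_prefix_of_prefix
        (hp.trans (gpath_mono Tb G (Nat.le_max_left n k)))
        (hq.trans (gpath_mono Tb G (Nat.le_max_right n k)))
    · rintro p ⟨n, hp⟩ q hq
      exact ⟨n, hq.trans hp⟩
    · intro q hq hcomp
      by_contra hqpos
      simp only [Set.mem_setOf_eq, not_exists] at hqpos
      have hall : ∀ n, gpath Tb G n <+: q := fun n =>
        (hcomp _ ⟨n, List.prefix_refl _⟩).resolve_right (hqpos n)
      have hnotall : ¬ ∀ k, ∃ i s', Tb.node (gpath Tb G k ++ [i]) = some s' ∧ G s' := by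
        intro hcond
        have hlen := gpath_length Tb G hcond (q.length + 1)
        have := (hall (q.length + 1)).length_le
        omega
      obtain ⟨k, hk⟩ := not_forall.1 hnotall
      obtain ⟨s, hn, hg⟩ := hinv k
      have hleaf := gpath_leaf Tb G hgood hn hg hk
      obtain ⟨t, ht⟩ := hall k
      have htne : t ≠ [] := by
        rintro rfl
        rw [List.append_nil] at ht
        subst ht
        exact hqpos k (List.prefix_refl _)
      obtain ⟨i, t', rfl⟩ := List.exists_cons_of_ne_nil htne
      have hqpre : gpath Tb G k ++ [i] <+: q := by
        rw [← ht]; exact ⟨t', by simp⟩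
      have := node_ne_none_of_prefix Tb hqpre hq
      exact this (hleaf i)
    · -- openness
      intro hC
      have hgfml : ∀ f ∈ ({f | ∃ p ∈ {q | ∃ n, q <+: gpath Tb G n},
          ∃ s, Tb.node p = some s ∧ f ∈ s} : Set (TabFm m)), GoodF M v f := by
        rintro f ⟨p, ⟨n, hpn⟩, s, hns, hf⟩
        obtain ⟨sn, hsn, hgs⟩ := hinv n
        obtain ⟨t, ht⟩ := hpn
        have hsub : s ⊆ sn := node_subset_of_prefix Tb t p s sn hns (by rw [ht, hsn])
        exact hgs f (hsub hf)
      rcases hC with ⟨φ, x, hmem, heq⟩ | ⟨φ, x, hmem, heq⟩ | hsplit |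
          ⟨φ, ψ, x, hmem, heq⟩ | ⟨α, φ, x, y, hmem, _, heq⟩ | ⟨α, φ, x, hmem, heq⟩ |
          ⟨φ, x, hT, hF, _⟩ | ⟨α, x, y, hT, hF, _⟩ |
          ⟨α, x, y, hmem, heq⟩ | ⟨α, x, y, hmem, heq⟩
      · exact List.cons_ne_nil _ _ heq.symm
      · exact List.cons_ne_nil _ _ heq.symm
      · obtain ⟨φ, x, ps, qs, hmem, _, _, hcard, heq⟩ := hsplit
        have h1 := List.append_eq_nil_iff.1 heq.symm
        have h2 : ps.toList = [] := List.map_eq_nil_iff.1 h1.1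
        have h3 : qs.toList = [] := List.map_eq_nil_iff.1 h1.2
        have h4 : ps = 0 := by rwa [← Multiset.toList_eq_nil]
        have h5 : qs = 0 := by rwa [← Multiset.toList_eq_nil]
        rw [h4, h5] at hcard
        simp at hcard
      · exact List.cons_ne_nil _ _ heq.symm
      · exact List.cons_ne_nil _ _ heq.symm
      · exact List.cons_ne_nil _ _ heq.symm
      · exact absurd (hgfml _ hT) (hgfml _ hF)
      · exact absurd (hgfml _ hT) (hgfml _ hF)
      · exact List.cons_ne_nil _ _ heq.symm
      · exact List.cons_ne_nil _ _ heq.symm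
  · -- Constructive completeness
    intro N Tb hexp Br hopen
    exact ⟨modelOf Br.fmls, reflects_of_open hopen (hexp Br hopen)⟩

end KmNotTableau
end
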